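/- Conversely, if the joint cdf H of (X₁,...,Xₙ,Z) satisfies ∂H(x₁,...,xₙ,z)/∂z = (1/f_Z(z))^{n-1} · ∏_{i=1}^n ∂F_{X_i,Z}(x_i,z)/∂z for all x₁,...,xₙ,z with f_Z(z) > 0, then X₁,...,Xₙ are conditionally independent given Z. -/
import Mathlib


open MeasureTheory Filter Topology Finset

noncomputable section

/-- Conditional independence of `X₁,...,Xₙ` given `Z`, via limits of conditioning
on shrinking intervals `{z ≤ Z < z + δ}`. -/
def CondIndepGiven {Ω : Type*} [MeasurableSpace Ω] (μ : Measure Ω) {n : ℕ}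
    (X : Fin n → Ω → ℝ) (Z : Ω → ℝ) : Prop :=
  ∀ (x : Fin n → ℝ) (z : ℝ) (L : Fin n → ℝ) (Ljoint : ℝ),
    Filter.Tendsto (fun δ : ℝ =>
        (μ ((⋂ i, {ω | X i ω ≤ x i}) ∩ {ω | z ≤ Z ω ∧ Z ω < z + δ})).toReal
          / (μ {ω | z ≤ Z ω ∧ Z ω < z + δ}).toReal)
      (𝓝[>] 0) (𝓝 Ljoint) →
    (∀ i, Filter.Tendsto (fun δ : ℝ =>
        (μ ({ω | X i ω ≤ x i} ∩ {ω | z ≤ Z ω ∧ Z ω < z + δ})).toReal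
          / (μ {ω | z ≤ Z ω ∧ Z ω < z + δ}).toReal)
      (𝓝[>] 0) (𝓝 (L i))) →
    Ljoint = ∏ i, L i

/-- If the cdf of `Z` is continuous, every level set of `Z` is null. -/
lemma null_level {Ω : Type*} [MeasurableSpace Ω] (μ : Measure Ω) [IsProbabilityMeasure μ]
    {Z : Ω → ℝ} (hZ : Measurable Z)
    (hcont : Continuous (fun t => (μ {ω | Z ω ≤ t}).toReal)) (c : ℝ) :
    μ {ω | Z ω = c} = 0 := by
  set F := fun t => (μ {ω | Z ω ≤ t}).toReal with hFdef
  have hbound : ∀ δ : ℝ, 0 < δ → (μ {ω | Z ω = c}).toReal ≤ F c - F (c - δ) := by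
    intro δ hδ
    have hsub : {ω | Z ω ≤ c - δ} ⊆ {ω | Z ω ≤ c} := by
      intro ω h
      simp only [Set.mem_setOf_eq] at h ⊢
      linarith
    have hmeas : MeasurableSet {ω | Z ω ≤ c - δ} := measurableSet_le hZ measurable_const
    have h1 : μ ({ω | Z ω ≤ c} \ {ω | Z ω ≤ c - δ})
        = μ {ω | Z ω ≤ c} - μ {ω | Z ω ≤ c - δ} :=
      measure_diff hsub hmeas.nullMeasurableSet (measure_ne_top μ _)
    have h2 : {ω | Z ω = c} ⊆ {ω | Z ω ≤ c} \ {ω | Z ω ≤ c - δ} := by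
      intro ω h
      have h' : Z ω = c := h
      constructor
      · exact le_of_eq h'
      · simp only [Set.mem_setOf_eq, h']; linarith
    calc (μ {ω | Z ω = c}).toReal
        ≤ (μ ({ω | Z ω ≤ c} \ {ω | Z ω ≤ c - δ})).toReal :=
          ENNReal.toReal_mono (measure_ne_top μ _) (measure_mono h2)
      _ = F c - F (c - δ) := by
          rw [h1, ENNReal.toReal_sub_of_le (measure_mono hsub) (measure_ne_top μ _)]
  have hlim : Tendsto (fun δ : ℝ => F c - F (c - δ)) (𝓝[>] (0:ℝ)) (𝓝 0) := by
    have h0 : Tendsto (fun δ : ℝ => F c - F (c - δ)) (𝓝 (0:ℝ)) (𝓝 (F c - F (c - 0))) :=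
      (tendsto_const_nhds.sub ((hcont.tendsto _).comp
        (tendsto_const_nhds.sub tendsto_id)))
    simpa using h0.mono_left nhdsWithin_le_nhds
  have hr : (μ {ω | Z ω = c}).toReal ≤ 0 :=
    ge_of_tendsto hlim (eventually_nhdsWithin_of_forall fun δ hδ => hbound δ hδ)
  have hr0 : (μ {ω | Z ω = c}).toReal = 0 := le_antisymm hr ENNReal.toReal_nonneg
  rcases (ENNReal.toReal_eq_zero_iff _).mp hr0 with h | h
  · exact h
  · exact absurd h (measure_ne_top μ _)

/-- The key limit: the conditional probability ratio tends to the ratio of derivatives. -/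
lemma ratio_tendsto {Ω : Type*} [MeasurableSpace Ω] (μ : Measure Ω) [IsProbabilityMeasure μ]
    {Z : Ω → ℝ} (hZ : Measurable Z)
    (hnull : ∀ c, μ {ω | Z ω = c} = 0)
    {A : Set Ω} (hA : MeasurableSet A) {g fz z : ℝ} (hfz : fz ≠ 0)
    (hF : HasDerivAt (fun t => (μ {ω | Z ω ≤ t}).toReal) fz z)
    (hG : HasDerivAt (fun t => (μ (A ∩ {ω | Z ω ≤ t})).toReal) g z) :
    Tendsto (fun δ : ℝ => (μ (A ∩ {ω | z ≤ Z ω ∧ Z ω < z + δ})).toReal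
      / (μ {ω | z ≤ Z ω ∧ Z ω < z + δ}).toReal) (𝓝[>] 0) (𝓝 (g / fz)) := by
  have key : ∀ (B : Set Ω), MeasurableSet B → ∀ δ : ℝ, 0 < δ →
      (μ (B ∩ {ω | z ≤ Z ω ∧ Z ω < z + δ})).toReal
        = (μ (B ∩ {ω | Z ω ≤ z + δ})).toReal - (μ (B ∩ {ω | Z ω ≤ z})).toReal := by
    intro B hB δ hδ
    have hN : μ ({ω | Z ω = z} ∪ {ω | Z ω = z + δ}) = 0 :=
      measure_union_null (hnull z) (hnull (z + δ))
    have hmeq : μ (B ∩ {ω | z ≤ Z ω ∧ Z ω < z + δ})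
        = μ (B ∩ {ω | z < Z ω ∧ Z ω ≤ z + δ}) := by
      apply le_antisymm
      · calc μ (B ∩ {ω | z ≤ Z ω ∧ Z ω < z + δ})
            ≤ μ ((B ∩ {ω | z < Z ω ∧ Z ω ≤ z + δ}) ∪ ({ω | Z ω = z} ∪ {ω | Z ω = z + δ})) := by
              apply measure_mono
              rintro ω ⟨hBω, h1, h2⟩
              rcases eq_or_lt_of_le h1 with h | h
              · exact Or.inr (Or.inl h.symm)
              · exact Or.inl ⟨hBω, h, le_of_lt h2⟩
          _ ≤ μ (B ∩ {ω | z < Z ω ∧ Z ω ≤ z + δ}) + μ ({ω | Z ω = z} ∪ {ω | Z ω = z + δ}) :=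
              measure_union_le _ _
          _ = μ (B ∩ {ω | z < Z ω ∧ Z ω ≤ z + δ}) := by rw [hN, add_zero]
      · calc μ (B ∩ {ω | z < Z ω ∧ Z ω ≤ z + δ})
            ≤ μ ((B ∩ {ω | z ≤ Z ω ∧ Z ω < z + δ}) ∪ ({ω | Z ω = z} ∪ {ω | Z ω = z + δ})) := by
              apply measure_mono
              rintro ω ⟨hBω, h1, h2⟩
              rcases lt_or_eq_of_le h2 with h | h
              · exact Or.inl ⟨hBω, le_of_lt h1, h⟩
              · exact Or.inr (Or.inr h)
          _ ≤ μ (B ∩ {ω | z ≤ Z ω ∧ Z ω < z + δ}) + μ ({ω | Z ω = z} ∪ {ω | Z ω = z + δ}) :=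
              measure_union_le _ _
          _ = μ (B ∩ {ω | z ≤ Z ω ∧ Z ω < z + δ}) := by rw [hN, add_zero]
    have hun : B ∩ {ω | Z ω ≤ z + δ}
        = (B ∩ {ω | Z ω ≤ z}) ∪ (B ∩ {ω | z < Z ω ∧ Z ω ≤ z + δ}) := by
      ext ω
      simp only [Set.mem_inter_iff, Set.mem_union, Set.mem_setOf_eq]
      constructor
      · rintro ⟨hBω, h⟩
        rcases le_or_gt (Z ω) z with h' | h'
        · exact Or.inl ⟨hBω, h'⟩
        · exact Or.inr ⟨hBω, h', h⟩
      · rintro (⟨hBω, h⟩ | ⟨hBω, h1, h2⟩)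
        · exact ⟨hBω, by linarith⟩
        · exact ⟨hBω, h2⟩
    have hdisj : Disjoint (B ∩ {ω | Z ω ≤ z}) (B ∩ {ω | z < Z ω ∧ Z ω ≤ z + δ}) := by
      apply Set.disjoint_left.mpr
      rintro ω ⟨_, h1⟩ ⟨_, h2, _⟩
      exact absurd h1 (not_le.mpr h2)
    have hm2 : MeasurableSet (B ∩ {ω | z < Z ω ∧ Z ω ≤ z + δ}) := by
      apply hB.inter
      exact (measurableSet_lt measurable_const hZ).inter (measurableSet_le hZ measurable_const)
    have hadd : μ (B ∩ {ω | Z ω ≤ z + δ})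
        = μ (B ∩ {ω | Z ω ≤ z}) + μ (B ∩ {ω | z < Z ω ∧ Z ω ≤ z + δ}) := by
      rw [hun, measure_union hdisj hm2]
    rw [hmeq]
    rw [hadd, ENNReal.toReal_add (measure_ne_top μ _) (measure_ne_top μ _)]
    ring
  have hmap : Tendsto (fun δ : ℝ => z + δ) (𝓝[>] (0:ℝ)) (𝓝[≠] z) := by
    have h1 : Tendsto (fun δ : ℝ => z + δ) (𝓝[>] (0:ℝ)) (𝓝 z) := by
      have h2 : Tendsto (fun δ : ℝ => z + δ) (𝓝 (0:ℝ)) (𝓝 (z + 0)) :=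
        tendsto_const_nhds.add tendsto_id
      simpa using h2.mono_left nhdsWithin_le_nhds
    refine tendsto_nhdsWithin_of_tendsto_nhds_of_eventually_within _ h1
      (eventually_nhdsWithin_of_forall fun δ hδ => ?_)
    have : (0:ℝ) < δ := hδ
    simp only [Set.mem_compl_iff, Set.mem_singleton_iff]
    intro h
    have hδ0 : δ = 0 := by linarith
    linarith
  have hGs : Tendsto (fun δ : ℝ => slope (fun t => (μ (A ∩ {ω | Z ω ≤ t})).toReal) z (z + δ))
      (𝓝[>] 0) (𝓝 g) := (hasDerivAt_iff_tendsto_slope.mp hG).comp hmap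
  have hFs : Tendsto (fun δ : ℝ => slope (fun t => (μ {ω | Z ω ≤ t}).toReal) z (z + δ))
      (𝓝[>] 0) (𝓝 fz) := (hasDerivAt_iff_tendsto_slope.mp hF).comp hmap
  have hdiv := hGs.div hFs hfz
  refine hdiv.congr' ?_
  filter_upwards [self_mem_nhdsWithin] with δ hδ
  have hδ' : (0:ℝ) < δ := hδ
  simp only [Pi.div_apply]
  rw [slope_def_field, slope_def_field]
  have hz : z + δ - z = δ := by ring
  rw [hz]
  rw [key A hA δ hδ']
  have hkeyu := key Set.univ MeasurableSet.univ δ hδ'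
  simp only [Set.univ_inter] at hkeyu
  rw [hkeyu]
  rw [div_div_div_comm, div_self (ne_of_gt hδ'), div_one]

theorem stmt1 {Ω : Type*} [MeasurableSpace Ω] (μ : Measure Ω) [IsProbabilityMeasure μ]
    {n : ℕ} (X : Fin n → Ω → ℝ) (Z : Ω → ℝ)
    (hX : ∀ i, Measurable (X i)) (hZ : Measurable Z)
    (fZ : ℝ → ℝ) (hfZpos : ∀ z, 0 < fZ z)
    (hfZ : ∀ z, HasDerivAt (fun t => (μ {ω | Z ω ≤ t}).toReal) (fZ z) z)
    (D : Fin n → ℝ → ℝ → ℝ)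
    (hD : ∀ i xi z, HasDerivAt
      (fun t => (μ ({ω | X i ω ≤ xi} ∩ {ω | Z ω ≤ t})).toReal) (D i xi z) z)
    (hH : ∀ (x : Fin n → ℝ) (z : ℝ),
      HasDerivAt (fun t => (μ ((⋂ i, {ω | X i ω ≤ x i}) ∩ {ω | Z ω ≤ t})).toReal)
        ((1 / fZ z) ^ (n - 1) * ∏ i, D i (x i) z) z) :
    CondIndepGiven μ X Z := by
  intro x z L Ljoint hj hi
  have hcont : Continuous (fun t => (μ {ω | Z ω ≤ t}).toReal) :=
    continuous_iff_continuousAt.mpr fun t => (hfZ t).continuousAt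
  have hnull := null_level μ hZ hcont
  have hfzne : fZ z ≠ 0 := ne_of_gt (hfZpos z)
  have hA : MeasurableSet (⋂ i, {ω | X i ω ≤ x i}) :=
    MeasurableSet.iInter fun i => measurableSet_le (hX i) measurable_const
  have hLj : Ljoint = ((1 / fZ z) ^ (n - 1) * ∏ i, D i (x i) z) / fZ z :=
    tendsto_nhds_unique hj (ratio_tendsto μ hZ hnull hA hfzne (hfZ z) (hH x z))
  have hLi : ∀ i, L i = D i (x i) z / fZ z := fun i =>
    tendsto_nhds_unique (hi i) (ratio_tendsto μ hZ hnull
      (measurableSet_le (hX i) measurable_const) hfzne (hfZ z) (hD i (x i) z))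
  rcases Nat.eq_zero_or_pos n with hn | hn
  · subst hn
    have h0 := hH x z
    simp only [Set.iInter_of_empty, Set.univ_inter, Finset.univ_eq_empty,
      Finset.prod_empty, pow_zero, mul_one, Nat.zero_sub] at h0
    have h1 : fZ z = 1 := (hfZ z).unique h0
    rw [hLj]
    simp [h1]
  · rw [hLj, Finset.prod_congr rfl fun i _ => hLi i]
    rw [Finset.prod_div_distrib, Finset.prod_const]
    have hcard : (Finset.univ : Finset (Fin n)).card = n := by simp
    rw [hcard]
    rw [one_div, inv_pow]
    have hpow : (fZ z) ^ (n - 1) * fZ z = (fZ z) ^ n := by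
      rw [← pow_succ, Nat.sub_add_cancel hn]
    rw [← hpow, ← div_div, inv_mul_eq_div]
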